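/- arXiv:2005.01921 — 2 statements merged into one kernel-verified Lean document; each statement's English description precedes it below -/
import Mathlib

section
/- In a Helly graph G, for every M ⊆ V(G) and every vertex v, e_G^M(v) = d_G(v, C_G(M)) + rad_G(M), and for any integers ℓ,k ≥ 0, C_G^{ℓ+k}(M) equals the set of vertices at distance at most ℓ from C_G^k(M); consequently diam_G(C_G^{ℓ+k}(M)) ≤ diam_G(C_G^k(M)) + 2ℓ. -/
open SimpleGraph

variable {V : Type*}

/-- `G` is `α`-weakly-Helly: every family of pairwise intersecting disks
`{D_G(v, r v) : v ∈ S}` has a common point after all radii are increased by `α`.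
Two disks `D(x,p)`, `D(y,q)` intersect iff `d(x,y) ≤ p + q`. -/
def WeaklyHelly (G : SimpleGraph V) (α : ℕ) : Prop :=
  ∀ (S : Set V) (r : V → ℕ),
    (∀ x ∈ S, ∀ y ∈ S, G.dist x y ≤ r x + r y) →
    ∃ c : V, ∀ v ∈ S, G.dist v c ≤ r v + α

/-- Eccentricity of `v` with respect to a set `M`: `max_{u ∈ M} d(v,u)`. -/
noncomputable def eccM (G : SimpleGraph V) (M : Set V) (v : V) : ℕ :=
  sSup ((G.dist v) '' M)

/-- `rad_G(M) = min_{v ∈ V} ecc^M(v)`. -/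
noncomputable def radM (G : SimpleGraph V) (M : Set V) : ℕ :=
  sInf (Set.range (eccM G M))

/-- Eccentricity of a vertex. -/
noncomputable def ecc (G : SimpleGraph V) (v : V) : ℕ :=
  sSup (Set.range (G.dist v))

/-- Radius of a graph. -/
noncomputable def grad (G : SimpleGraph V) : ℕ :=
  sInf (Set.range (ecc G))

/-- Diameter of a graph. -/
noncomputable def gdiam (G : SimpleGraph V) : ℕ :=
  sSup (Set.range (ecc G))

/-- Diameter of a set of vertices: `max_{u,v ∈ S} d(u,v)`. -/
noncomputable def diamS (G : SimpleGraph V) (S : Set V) : ℕ :=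
  sSup {d | ∃ u ∈ S, ∃ v ∈ S, d = G.dist u v}

/-- `C_G^k(M) = {v : ecc^M(v) ≤ rad_G(M) + k}`. -/
def Ck (G : SimpleGraph V) (M : Set V) (k : ℕ) : Set V :=
  {v | eccM G M v ≤ radM G M + k}

/-- Distance from a vertex to a set: `min_{s ∈ S} d(x,s)`. -/
noncomputable def distToSet (G : SimpleGraph V) (x : V) (S : Set V) : ℕ :=
  sInf ((G.dist x) '' S)

/-- The Helly-gap of `G`: the least `α` such that `G` is `α`-weakly-Helly. -/
noncomputable def hellyGap (G : SimpleGraph V) : ℕ :=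
  sInf {α | WeaklyHelly G α}

/-! A vertex `v` with `e(v) ≤ rad(M) + l + k` lies within distance `l` of `C^k(M)`: the disk of
radius `l` around `v` and the disks of radius `rad(M) + k` around the vertices of `M` pairwise
intersect (two vertices of `M` are within `2 rad(M)` of each other via a central vertex), so by the
Helly property they share a vertex `c`, and then `c ∈ C^k(M)`. Conversely `e(v) ≤ d(v, c) + e(c)` by
the triangle inequality. The eccentricity formula is the case `k = 0`, and the diameter bound comes
from moving two vertices of `C^{l+k}(M)` to nearby vertices of `C^k(M)`. -/

section

variable {G : SimpleGraph V} {M S : Set V} {u v w c : V}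

theorem WeaklyHelly.exists_forall_dist_le {α : ℕ} (hH : WeaklyHelly G α) {ι : Type*}
    (x : ι → V) (r : ι → ℕ) (hr : ∀ i j, G.dist (x i) (x j) ≤ r i + r j) :
    ∃ c, ∀ i, G.dist (x i) c ≤ r i + α := by
  -- `WeaklyHelly` takes one radius per vertex: at a repeated centre keep the smallest one.
  have hmin : ∀ i, ∃ j, x j = x i ∧ r j = sInf (r '' {j | x j = x i}) ∧ r j ≤ r i := by
    intro i
    obtain ⟨j, hj, hrj⟩ := Nat.sInf_mem (s := r '' {j | x j = x i}) ⟨r i, i, rfl, rfl⟩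
    exact ⟨j, hj, hrj, hrj ▸ Nat.sInf_le ⟨i, rfl, rfl⟩⟩
  choose m hxm hrm hle using hmin
  let ρ : V → ℕ := fun y => sInf (r '' {j | x j = y})
  obtain ⟨c, hc⟩ := hH (Set.range x) ρ <| by
    rintro _ ⟨i, rfl⟩ _ ⟨j, rfl⟩
    simpa only [ρ, hxm, ← hrm] using hr (m i) (m j)
  refine ⟨c, fun i => (hc (x i) ⟨i, rfl⟩).trans ?_⟩
  simpa only [ρ, ← hrm] using Nat.add_le_add_right (hle i) α

theorem eccM_le {a : ℕ} (h : ∀ u ∈ M, G.dist v u ≤ a) : eccM G M v ≤ a :=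
  csSup_le' <| by rintro _ ⟨u, hu, rfl⟩; exact h u hu

theorem dist_le_eccM [Finite V] (hu : u ∈ M) : G.dist v u ≤ eccM G M v :=
  le_csSup (M.toFinite.image _).bddAbove ⟨u, hu, rfl⟩

theorem radM_le_eccM : radM G M ≤ eccM G M v :=
  Nat.sInf_le ⟨v, rfl⟩

variable (G M) in
theorem exists_eccM_eq_radM [Nonempty V] : ∃ c, eccM G M c = radM G M :=
  Nat.sInf_mem (Set.range_nonempty _)

theorem SimpleGraph.Connected.eccM_le_dist_add [Finite V] (hc : G.Connected) (v c : V) :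
    eccM G M v ≤ G.dist v c + eccM G M c :=
  eccM_le fun _ hu => hc.dist_triangle.trans (Nat.add_le_add_left (dist_le_eccM hu) _)

theorem SimpleGraph.Connected.dist_le_two_mul_radM [Finite V] (hc : G.Connected) (hu : u ∈ M) (hw : w ∈ M) :
    G.dist u w ≤ 2 * radM G M := by
  have := hc.nonempty
  obtain ⟨c, hc₀⟩ := exists_eccM_eq_radM G M
  calc G.dist u w ≤ G.dist u c + G.dist c w := hc.dist_triangle
    _ ≤ radM G M + radM G M := by
        rw [G.dist_comm, ← hc₀]
        exact Nat.add_le_add (dist_le_eccM hu) (dist_le_eccM hw)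
    _ = 2 * radM G M := (two_mul _).symm

theorem mem_Ck_iff {k : ℕ} : v ∈ Ck G M k ↔ eccM G M v ≤ radM G M + k :=
  Iff.rfl

variable (G M) in
theorem Ck_nonempty [Nonempty V] (k : ℕ) : (Ck G M k).Nonempty :=
  let ⟨c, hc⟩ := exists_eccM_eq_radM G M
  ⟨c, by rw [mem_Ck_iff, hc]; exact Nat.le_add_right _ _⟩

theorem SimpleGraph.Connected.exists_mem_Ck_dist_le [Finite V] (hc : G.Connected) (hH : WeaklyHelly G 0)
    {l k : ℕ} (hv : v ∈ Ck G M (l + k)) : ∃ c ∈ Ck G M k, G.dist v c ≤ l := by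
  set R := radM G M
  let x : Option M → V := fun i => i.elim v Subtype.val
  let r : Option M → ℕ := fun i => i.elim l fun _ => R + k
  have hvM : ∀ u ∈ M, G.dist v u ≤ l + (R + k) := fun u hu =>
    (dist_le_eccM hu).trans (by rw [mem_Ck_iff] at hv; omega)
  have hMM : ∀ u ∈ M, ∀ w ∈ M, G.dist u w ≤ (R + k) + (R + k) := fun u hu w hw =>
    (hc.dist_le_two_mul_radM hu hw).trans (by omega)
  obtain ⟨c, hxc⟩ := hH.exists_forall_dist_le x r <| by
    rintro (_ | ⟨u, hu⟩) (_ | ⟨w, hw⟩)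
    · simp [x]
    · exact hvM w hw
    · simpa [x, r, G.dist_comm, add_comm] using hvM u hu
    · exact hMM u hu w hw
  refine ⟨c, eccM_le fun u hu => ?_, hxc none⟩
  rw [G.dist_comm]
  exact hxc (some ⟨u, hu⟩)

theorem distToSet_le (hc : c ∈ S) : distToSet G v S ≤ G.dist v c :=
  Nat.sInf_le ⟨c, hc, rfl⟩

variable (G v) in
theorem exists_mem_dist_eq_distToSet (hS : S.Nonempty) :
    ∃ c ∈ S, G.dist v c = distToSet G v S :=
  Nat.sInf_mem (hS.image _)

theorem SimpleGraph.Connected.Ck_add_eq [Finite V] (hc : G.Connected) (hH : WeaklyHelly G 0) (l k : ℕ) :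
    Ck G M (l + k) = {v | distToSet G v (Ck G M k) ≤ l} := by
  have := hc.nonempty
  ext v
  constructor
  · intro hv
    obtain ⟨c, hcC, hvc⟩ := hc.exists_mem_Ck_dist_le hH hv
    exact (distToSet_le hcC).trans hvc
  · intro (hv : distToSet G v (Ck G M k) ≤ l)
    obtain ⟨c, hcC, hvc⟩ := exists_mem_dist_eq_distToSet G v (Ck_nonempty G M k)
    have := hc.eccM_le_dist_add (M := M) v c
    rw [mem_Ck_iff] at hcC ⊢
    omega

theorem SimpleGraph.Connected.eccM_eq_distToSet_add_radM [Finite V] (hc : G.Connected)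
    (hH : WeaklyHelly G 0) (v : V) :
    eccM G M v = distToSet G v (Ck G M 0) + radM G M := by
  have := hc.nonempty
  have hR : radM G M ≤ eccM G M v := radM_le_eccM
  have hle : distToSet G v (Ck G M 0) ≤ eccM G M v - radM G M := by
    have hv : v ∈ Ck G M (eccM G M v - radM G M + 0) := by rw [mem_Ck_iff]; omega
    rwa [hc.Ck_add_eq hH] at hv
  obtain ⟨c, hcC, hvc⟩ := exists_mem_dist_eq_distToSet G v (Ck_nonempty G M 0)
  have := hc.eccM_le_dist_add (M := M) v c
  rw [mem_Ck_iff] at hcC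
  omega

theorem dist_le_diamS [Finite V] (hu : u ∈ S) (hv : v ∈ S) : G.dist u v ≤ diamS G S :=
  le_csSup ((Set.finite_range fun p : V × V => G.dist p.1 p.2).subset
    (by rintro _ ⟨u, -, v, -, rfl⟩; exact ⟨(u, v), rfl⟩)).bddAbove ⟨u, hu, v, hv, rfl⟩

theorem diamS_le {a : ℕ} (h : ∀ u ∈ S, ∀ v ∈ S, G.dist u v ≤ a) : diamS G S ≤ a :=
  csSup_le' <| by rintro _ ⟨u, hu, v, hv, rfl⟩; exact h u hu v hv

theorem SimpleGraph.Connected.diamS_Ck_add_le [Finite V] (hc : G.Connected) (hH : WeaklyHelly G 0)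
    (l k : ℕ) : diamS G (Ck G M (l + k)) ≤ diamS G (Ck G M k) + 2 * l := by
  refine diamS_le fun u hu v hv => ?_
  obtain ⟨cu, hcu, hucu⟩ := hc.exists_mem_Ck_dist_le hH hu
  obtain ⟨cv, hcv, hvcv⟩ := hc.exists_mem_Ck_dist_le hH hv
  calc G.dist u v ≤ G.dist u cu + G.dist cu v := hc.dist_triangle
    _ ≤ G.dist u cu + (G.dist cu cv + G.dist cv v) := Nat.add_le_add_left hc.dist_triangle _
    _ ≤ l + (diamS G (Ck G M k) + l) := by
        rw [G.dist_comm (u := cv)]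
        exact Nat.add_le_add hucu (Nat.add_le_add (dist_le_diamS hcu hcv) hvcv)
    _ = diamS G (Ck G M k) + 2 * l := by ring

end

/-- In a Helly graph: the eccentricity formula ecc^M(v) = d(v, C_G(M)) + rad_G(M);
C_G^{l+k}(M) is the disk of radius l around C_G^k(M); and
diam(C_G^{l+k}(M)) ≤ diam(C_G^k(M)) + 2l. -/
theorem helly_center_disk [Fintype V] (G : SimpleGraph V) (hc : G.Connected)
    (hH : WeaklyHelly G 0) (M : Set V) :
    (∀ v : V, eccM G M v = distToSet G v (Ck G M 0) + radM G M) ∧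
    (∀ l k : ℕ, Ck G M (l + k) = {v : V | distToSet G v (Ck G M k) ≤ l}) ∧
    (∀ l k : ℕ, diamS G (Ck G M (l + k)) ≤ diamS G (Ck G M k) + 2 * l) :=
  ⟨hc.eccM_eq_distToSet_add_radM hH, hc.Ck_add_eq hH, hc.diamS_Ck_add_le hH⟩
end

section
/- In a Helly graph G, for any M ⊆ V(G), 2·rad_G(M) − 1 ≤ diam_G(M) ≤ 2·rad_G(M); equivalently rad_G(M) = ⌈diam_G(M)/2⌉. -/
open SimpleGraph

variable {V : Type*}

/-! A vertex of minimum `M`-eccentricity `R` puts all of `M` within `2R` of each other, so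
`diam M ≤ 2 rad M`. Conversely the disks of radius `⌈diam M / 2⌉` around the points of `M`
pairwise intersect, so the Helly property yields a vertex of `M`-eccentricity at most
`⌈diam M / 2⌉`. -/

namespace SimpleGraph

variable (G : SimpleGraph V) {M : Set V}

theorem dist_le_eccM (hM : M.Finite) (v : V) {u : V} (hu : u ∈ M) :
    G.dist v u ≤ eccM G M v :=
  le_csSup (hM.image _).bddAbove ⟨u, hu, rfl⟩

theorem eccM_le {v : V} {n : ℕ} (h : ∀ u ∈ M, G.dist v u ≤ n) : eccM G M v ≤ n :=
  csSup_le' <| by rintro _ ⟨u, hu, rfl⟩; exact h u hu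

theorem dist_le_diamS (hM : M.Finite) {u v : V} (hu : u ∈ M) (hv : v ∈ M) :
    G.dist u v ≤ diamS G M := by
  have hfin : {d | ∃ u ∈ M, ∃ v ∈ M, d = G.dist u v}.Finite :=
    (hM.image2 G.dist hM).subset <| by rintro _ ⟨u, hu, v, hv, rfl⟩; exact ⟨u, hu, v, hv, rfl⟩
  exact le_csSup hfin.bddAbove ⟨u, hu, v, hv, rfl⟩

theorem diamS_le {n : ℕ} (h : ∀ u ∈ M, ∀ v ∈ M, G.dist u v ≤ n) : diamS G M ≤ n :=
  csSup_le' <| by rintro _ ⟨u, hu, v, hv, rfl⟩; exact h u hu v hv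

theorem radM_le_eccM (v : V) : radM G M ≤ eccM G M v :=
  Nat.sInf_le ⟨v, rfl⟩

theorem exists_eccM_eq_radM [Nonempty V] : ∃ c, eccM G M c = radM G M :=
  Nat.sInf_mem (Set.range_nonempty _)

theorem Connected.diamS_le_two_mul_eccM {G : SimpleGraph V} (hG : G.Connected) (hM : M.Finite)
    (c : V) : diamS G M ≤ 2 * eccM G M c :=
  G.diamS_le fun u hu v hv =>
    calc G.dist u v ≤ G.dist c u + G.dist c v := dist_comm (u := u) ▸ hG.dist_triangle
      _ ≤ 2 * eccM G M c := by
        have := G.dist_le_eccM hM c hu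
        have := G.dist_le_eccM hM c hv
        omega

theorem Connected.diamS_le_two_mul_radM [Nonempty V] {G : SimpleGraph V} (hG : G.Connected)
    (hM : M.Finite) : diamS G M ≤ 2 * radM G M := by
  obtain ⟨c, hc⟩ := G.exists_eccM_eq_radM (M := M)
  exact hc ▸ hG.diamS_le_two_mul_eccM hM c

theorem radM_le_of_weaklyHelly {α : ℕ} (hH : WeaklyHelly G α) (hM : M.Finite) :
    radM G M ≤ (diamS G M + 1) / 2 + α := by
  obtain ⟨z, hz⟩ := hH M (fun _ => (diamS G M + 1) / 2) fun x hx y hy => by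
    have := G.dist_le_diamS hM hx hy
    omega
  calc radM G M ≤ eccM G M z := G.radM_le_eccM z
    _ ≤ (diamS G M + 1) / 2 + α := G.eccM_le fun u hu => dist_comm (u := u) ▸ hz u hu

end SimpleGraph

/-- In a Helly graph, 2 rad_G(M) - 1 ≤ diam_G(M) ≤ 2 rad_G(M); equivalently
rad_G(M) = ⌈diam_G(M)/2⌉ = (diam_G(M)+1)/2. -/
theorem helly_diam_rad [Fintype V] (G : SimpleGraph V) (hc : G.Connected)
    (hH : WeaklyHelly G 0) (M : Set V) (hM : M.Nonempty) :
    2 * radM G M ≤ diamS G M + 1 ∧ diamS G M ≤ 2 * radM G M ∧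
      radM G M = (diamS G M + 1) / 2 := by
  have : Nonempty V := ⟨hM.some⟩
  have hdiam := hc.diamS_le_two_mul_radM M.toFinite
  have hrad := G.radM_le_of_weaklyHelly hH M.toFinite
  omega
end
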